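/- arXiv:1607.07654 — 3 statements merged into one kernel-verified Lean document; each statement's English description precedes it below -/
import Mathlib

section
/- Every s-uniform hypergraph tree is strictly balanced. -/
open scoped Classical

/-- A finite `s`-uniform hypergraph on a vertex set of natural numbers. -/
structure UHypergraph (s : ℕ) where
  V : Finset ℕ
  E : Finset (Finset ℕ)
  card_edges : ∀ e ∈ E, e.card = s
  edges_sub : ∀ e ∈ E, e ⊆ V

namespace UHypergraph

/-- The density `|E|/|V|` of a hypergraph. -/
noncomputable def density {s : ℕ} (G : UHypergraph s) : ℚ :=
  (G.E.card : ℚ) / (G.V.card : ℚ)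

/-- `G` is strictly balanced: every proper subhypergraph with at least one
vertex has strictly smaller density. -/
def StrictlyBalanced {s : ℕ} (G : UHypergraph s) : Prop :=
  G.V.Nonempty ∧ ∀ H : UHypergraph s, H.V ⊆ G.V → H.E ⊆ G.E → H.V.Nonempty →
    ¬(H.V = G.V ∧ H.E = G.E) → H.density < G.density

/-- The subhypergraph of `G` induced on the vertex set `S`. -/
def restrict {s : ℕ} (G : UHypergraph s) (S : Finset ℕ) : UHypergraph s where
  V := G.V ∩ S
  E := G.E.filter (fun e => e ⊆ S)
  card_edges := fun e he => G.card_edges e (Finset.mem_filter.mp he).1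
  edges_sub := fun e he a ha => Finset.mem_inter.mpr
    ⟨G.edges_sub e (Finset.mem_filter.mp he).1 ha, (Finset.mem_filter.mp he).2 ha⟩

/-- A cycle `(v 0, e 0, v 1, e 1, …, v (m-1), e (m-1), v m = v 0)` in `G`. -/
def IsCycle {s : ℕ} (G : UHypergraph s) (m : ℕ) (v : ℕ → ℕ) (e : ℕ → Finset ℕ) : Prop :=
  0 < m ∧ v m = v 0 ∧ e m = e 0 ∧
  (∀ i < m, e i ∈ G.E) ∧ (∀ i < m, v i ∈ G.V) ∧
  (∀ i < m, v i ≠ v (i + 1)) ∧ (∀ i < m, e i ≠ e (i + 1)) ∧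
  (∀ i < m, v i ∈ e i ∧ v (i + 1) ∈ e i)

/-- `G` is connected: it is nonempty and any two vertices are joined by a
chain of edges. -/
def Connected {s : ℕ} (G : UHypergraph s) : Prop :=
  G.V.Nonempty ∧ ∀ u ∈ G.V, ∀ w ∈ G.V,
    Relation.ReflTransGen (fun a b => ∃ e ∈ G.E, a ∈ e ∧ b ∈ e) u w

/-- A tree is a connected hypergraph without cycles. -/
def IsTree {s : ℕ} (G : UHypergraph s) : Prop :=
  G.Connected ∧ ¬ ∃ m v e, G.IsCycle m v e

/-- For a rooted pair: number of nonroot vertices minus `α` times the number of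
edges with at least one nonroot vertex, for roots `S` in the hypergraph `K`. -/
noncomputable def exVal {s : ℕ} (α : ℝ) (S : Finset ℕ) (K : UHypergraph s) : ℝ :=
  ((K.V \ S).card : ℝ) - ((K.E.filter (fun f => ¬ f ⊆ S)).card : ℝ) * α

/-- The rooted hypergraph `(S, K)` is dense: `v - e·α < 0`. -/
noncomputable def IsDense {s : ℕ} (α : ℝ) (S : Finset ℕ) (K : UHypergraph s) : Prop :=
  exVal α S K < 0

/-- The rooted hypergraph `(S, K)` is sparse: `v - e·α > 0`. -/
noncomputable def IsSparse {s : ℕ} (α : ℝ) (S : Finset ℕ) (K : UHypergraph s) : Prop :=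
  0 < exVal α S K

/-- `(R, K)` is rigid: every nailextension `(S, K)` with `R ⊆ S ⊊ V(K)` is dense. -/
noncomputable def Rigid {s : ℕ} (α : ℝ) (R : Finset ℕ) (K : UHypergraph s) : Prop :=
  ∀ S : Finset ℕ, R ⊆ S → S ⊂ K.V → IsDense α S K

/-- `(R, K)` is safe: every subextension `(R, K|_S)` with `R ⊊ S ⊆ V(K)` is sparse. -/
noncomputable def Safe {s : ℕ} (α : ℝ) (R : Finset ℕ) (K : UHypergraph s) : Prop :=
  ∀ S : Finset ℕ, R ⊂ S → S ⊆ K.V → IsSparse α R (K.restrict S)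

/-- `(R, K)` is minimally safe: safe, with no safe nailextension. -/
noncomputable def MinimallySafe {s : ℕ} (α : ℝ) (R : Finset ℕ) (K : UHypergraph s) : Prop :=
  Safe α R K ∧ ¬ ∃ S : Finset ℕ, R ⊂ S ∧ S ⊂ K.V ∧ Safe α S K

/-- A rigid `t`-chain `x 0 ⊆ x 1 ⊆ … ⊆ x k` in `G`: each step adds at most `t`
vertices and each `(x i, G|_{x (i+1)})` is rigid. -/
noncomputable def IsRigidChain {s : ℕ} (α : ℝ) (G : UHypergraph s) (t k : ℕ)
    (x : ℕ → Finset ℕ) : Prop :=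
  (∀ i < k, x i ⊆ x (i + 1)) ∧ (∀ i < k, (x (i + 1) \ x i).card ≤ t) ∧
  (∀ i ≤ k, x i ⊆ G.V) ∧ (∀ i < k, Rigid α (x i) (G.restrict (x (i + 1))))

/-- `C` is the `t`-closure of `X` in `G`: it is the endpoint of a rigid
`t`-chain starting at `X` and contains the endpoint of every such chain. -/
noncomputable def IsTClosure {s : ℕ} (α : ℝ) (G : UHypergraph s) (t : ℕ)
    (X C : Finset ℕ) : Prop :=
  (∃ k x, IsRigidChain α G t k x ∧ x 0 = X ∧ x k = C) ∧
  ∀ k' x', IsRigidChain α G t k' x' → x' 0 = X → x' k' ⊆ C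

end UHypergraph

open UHypergraph

/-- The possible edges of an `s`-uniform hypergraph on `Fin n`. -/
def edgeCandidates (s n : ℕ) : Finset (Finset (Fin n)) :=
  Finset.univ.filter (fun e => e.card = s)

/-- The probability of the event `A` under the binomial random `s`-uniform
hypergraph `G^s(n,p)`: each of the `C(n,s)` possible edges appears
independently with probability `p`. -/
noncomputable def hyperProb (s n : ℕ) (p : ℝ) (A : Set (Finset (Finset (Fin n)))) : ℝ :=
  ∑ E ∈ (edgeCandidates s n).powerset,
    if E ∈ A then p ^ E.card * (1 - p) ^ ((edgeCandidates s n).card - E.card) else 0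

/-- The `s`-uniform hypergraph on vertex set `{0,…,n-1}` determined by an
edge set over `Fin n`. -/
noncomputable def ofEdges (s n : ℕ) (E : Finset (Finset (Fin n))) : UHypergraph s where
  V := Finset.range n
  E := (E.filter (fun e => e.card = s)).image (fun e => e.image Fin.val)
  card_edges := by
    intro f hf
    simp only [Finset.mem_image, Finset.mem_filter] at hf
    obtain ⟨e, ⟨_, hcard⟩, rfl⟩ := hf
    rw [Finset.card_image_of_injective _ Fin.val_injective]
    exact hcard
  edges_sub := by
    intro f hf a ha
    simp only [Finset.mem_image, Finset.mem_filter] at hf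
    obtain ⟨e, _, rfl⟩ := hf
    simp only [Finset.mem_image] at ha
    obtain ⟨b, _, rfl⟩ := ha
    exact Finset.mem_range.mpr b.isLt

/-! Write `c = s - 1`. In an acyclic hypergraph every nonempty set of edges has a leaf, an edge
meeting the union of the others in at most one vertex: otherwise one can keep walking from an edge
through a second shared vertex into another edge, and on a finite set such a walk closes up into a
cycle. Peeling off leaves shows that `e` edges cover at least `1 + e c` vertices. In a connected
hypergraph the edges can be added one at a time, each meeting the earlier ones, so `k` edges span at
most `1 + k c` vertices. A proper subhypergraph of a tree thus has `e < k` edges and at least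
`1 + e c` vertices, and `e / (1 + e c) < k / (1 + k c)`. -/

theorem Relation.ReflTransGen.exists_boundary {α : Type*} {r : α → α → Prop} {P : α → Prop}
    {a b : α} (h : Relation.ReflTransGen r a b) (ha : P a) (hb : ¬ P b) :
    ∃ x y, r x y ∧ P x ∧ ¬ P y := by
  induction h with
  | refl => exact absurd ha hb
  | @tail c d _ hcd ih =>
    by_cases hc : P c
    · exact ⟨c, d, hcd, hc, hb⟩
    · exact ih hc

theorem Set.Finite.exists_periodic_chain {α : Type*} {S : Set α} (hS : S.Finite)
    {r : α → α → Prop} (h : ∀ a ∈ S, ∃ b ∈ S, r a b) {a₀ : α} (ha₀ : a₀ ∈ S) :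
    ∃ m, 0 < m ∧ ∃ p : ℕ → α, p m = p 0 ∧ ∀ i, p i ∈ S ∧ r (p i) (p (i + 1)) := by
  have := hS.to_subtype
  choose f hfS hf using h
  let g : S → S := fun a => ⟨f a a.2, hfS a a.2⟩
  obtain ⟨i, j, hij, heq⟩ := Finite.exists_ne_map_eq_of_infinite fun n => g^[n] ⟨a₀, ha₀⟩
  wlog hlt : i < j generalizing i j
  · exact this j i hij.symm heq.symm (by omega)
  refine ⟨j - i, by omega, fun t => (g^[i + t] ⟨a₀, ha₀⟩ : α), ?_, fun t => ⟨Subtype.prop _, ?_⟩⟩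
  · simp only [Nat.add_sub_cancel' hlt.le, add_zero, heq]
  · change r _ (g^[i + t + 1] _ : α)
    rw [Function.iterate_succ_apply']
    exact hf _ _

namespace UHypergraph

variable {s : ℕ} {G : UHypergraph s}

theorem nonempty_of_mem_E (hs : 0 < s) {e : Finset ℕ} (he : e ∈ G.E) : e.Nonempty := by
  rw [← Finset.card_pos, G.card_edges e he]
  exact hs

theorem biUnion_E_subset_V (G : UHypergraph s) : G.E.biUnion id ⊆ G.V :=
  Finset.biUnion_subset.mpr G.edges_sub

theorem Connected.exists_edge_crossing (hG : G.Connected) {A : Finset ℕ} {u w : ℕ}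
    (hu : u ∈ G.V) (huA : u ∈ A) (hw : w ∈ G.V) (hwA : w ∉ A) :
    ∃ e ∈ G.E, (∃ a ∈ e, a ∈ A) ∧ ∃ b ∈ e, b ∉ A := by
  obtain ⟨a, b, ⟨e, he, hae, hbe⟩, haA, hbA⟩ := (hG.2 u hu w hw).exists_boundary huA hwA
  exact ⟨e, he, ⟨a, hae, haA⟩, b, hbe, hbA⟩

theorem Connected.card_V_le_one_of_E_eq_empty (hG : G.Connected) (hE : G.E = ∅) :
    G.V.card ≤ 1 :=
  Finset.card_le_one.mpr fun u hu w hw => by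
    by_contra huw
    obtain ⟨e, he, -⟩ := hG.exists_edge_crossing hu (Finset.mem_singleton_self u) hw
      (Finset.notMem_singleton.mpr (Ne.symm huw))
    simp [hE] at he

theorem Connected.V_subset_biUnion_E (hs : 0 < s) (hG : G.Connected) (hE : G.E.Nonempty) :
    G.V ⊆ G.E.biUnion id := by
  intro v hv
  by_contra hvE
  obtain ⟨f, hf⟩ := hE
  obtain ⟨u, hu⟩ := nonempty_of_mem_E hs hf
  obtain ⟨e, he, ⟨a, hae, haE⟩, -⟩ := hG.exists_edge_crossing (A := G.V \ G.E.biUnion id)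
    hv (Finset.mem_sdiff.mpr ⟨hv, hvE⟩) (G.edges_sub f hf hu)
    (fun h => (Finset.mem_sdiff.mp h).2 (Finset.mem_biUnion.mpr ⟨f, hf, hu⟩))
  exact (Finset.mem_sdiff.mp haE).2 (Finset.mem_biUnion.mpr ⟨e, he, hae⟩)

theorem Connected.exists_edge_meeting (hs : 0 < s) (hG : G.Connected) {F : Finset (Finset ℕ)}
    (hFE : F ⊆ G.E) (hF : F.Nonempty) (hFG : F ≠ G.E) :
    ∃ g ∈ G.E, g ∉ F ∧ (g ∩ F.biUnion id).Nonempty := by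
  obtain ⟨g₀, hg₀, hg₀F⟩ := Finset.exists_of_ssubset (hFE.ssubset_of_ne hFG)
  obtain ⟨w, hw⟩ := nonempty_of_mem_E hs hg₀
  by_cases hwF : w ∈ F.biUnion id
  · exact ⟨g₀, hg₀, hg₀F, w, Finset.mem_inter.mpr ⟨hw, hwF⟩⟩
  obtain ⟨f, hf⟩ := hF
  obtain ⟨u, hu⟩ := nonempty_of_mem_E hs (hFE hf)
  obtain ⟨e, he, ⟨a, hae, haF⟩, b, hbe, hbF⟩ := hG.exists_edge_crossing
    (G.edges_sub f (hFE hf) hu) (Finset.mem_biUnion.mpr ⟨f, hf, hu⟩) (G.edges_sub g₀ hg₀ hw) hwF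
  exact ⟨e, he, fun heF => hbF (Finset.mem_biUnion.mpr ⟨e, heF, hbe⟩),
    a, Finset.mem_inter.mpr ⟨hae, haF⟩⟩

theorem card_biUnion_insert_le {F : Finset (Finset ℕ)} {g : Finset ℕ} (hg : g.card = s)
    (hgF : (g ∩ F.biUnion id).Nonempty) :
    ((insert g F).biUnion id).card ≤ (F.biUnion id).card + (s - 1) := by
  have := Finset.card_union_add_card_inter g (F.biUnion id)
  have := hgF.card_pos
  rw [Finset.biUnion_insert, id]
  omega

theorem Connected.exists_subset_card_biUnion_le (hs : 0 < s) (hG : G.Connected) :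
    ∀ i < G.E.card, ∃ F ⊆ G.E, F.card = i + 1 ∧ (F.biUnion id).card ≤ 1 + (i + 1) * (s - 1)
  | 0, hk => by
    obtain ⟨f, hf⟩ := Finset.card_pos.mp hk
    refine ⟨{f}, Finset.singleton_subset_iff.mpr hf, rfl, ?_⟩
    rw [Finset.singleton_biUnion, id, G.card_edges f hf]
    omega
  | i + 1, hk => by
    obtain ⟨F, hFE, hFcard, hFV⟩ := hG.exists_subset_card_biUnion_le hs i (by omega)
    obtain ⟨g, hg, hgF, hgV⟩ := hG.exists_edge_meeting hs hFE (Finset.card_pos.mp (by omega))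
      (by rintro rfl; omega)
    refine ⟨insert g F, Finset.insert_subset hg hFE,
      by rw [Finset.card_insert_of_notMem hgF, hFcard], ?_⟩
    have := card_biUnion_insert_le (G.card_edges g hg) hgV
    rw [add_mul (i + 1) 1]
    omega

theorem Connected.card_V_le (hs : 0 < s) (hG : G.Connected) :
    G.V.card ≤ 1 + G.E.card * (s - 1) := by
  obtain hE | hE := G.E.eq_empty_or_nonempty
  · have := hG.card_V_le_one_of_E_eq_empty hE
    omega
  obtain ⟨F, hFE, hFcard, hFV⟩ := hG.exists_subset_card_biUnion_le hs (G.E.card - 1)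
    (by have := hE.card_pos; omega)
  have hFG : F = G.E := Finset.eq_of_subset_of_card_le hFE (by omega)
  subst hFG
  have := Finset.card_le_card (hG.V_subset_biUnion_E hs hE)
  rw [Nat.sub_add_cancel hE.card_pos] at hFV
  omega

theorem exists_leaf (hac : ¬ ∃ m v e, G.IsCycle m v e) {F : Finset (Finset ℕ)} (hFE : F ⊆ G.E)
    (hF : F.Nonempty) : ∃ f ∈ F, (f ∩ (F.erase f).biUnion id).card ≤ 1 := by
  by_contra! hleaf
  let S : Set (ℕ × Finset ℕ) := {p | p.2 ∈ F ∧ p.1 ∈ p.2}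
  have hS : S.Finite := (F.biUnion id ×ˢ F).finite_toSet.subset fun p hp =>
    Finset.mem_product.mpr ⟨Finset.mem_biUnion.mpr ⟨p.2, hp.1, hp.2⟩, hp.1⟩
  have hstep : ∀ p ∈ S, ∃ q ∈ S, q.1 ∈ p.2 ∧ p.1 ≠ q.1 ∧ p.2 ≠ q.2 := by
    rintro ⟨v, f⟩ ⟨hf, -⟩
    obtain ⟨w, hw, hwv⟩ := Finset.exists_mem_ne (hleaf f hf) v
    obtain ⟨hwf, hw⟩ := Finset.mem_inter.mp hw
    obtain ⟨g, hg, hwg⟩ := Finset.mem_biUnion.mp hw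
    exact ⟨(w, g), ⟨Finset.mem_of_mem_erase hg, hwg⟩, hwf, hwv.symm,
      (Finset.ne_of_mem_erase hg).symm⟩
  obtain ⟨f₀, hf₀⟩ := hF
  obtain ⟨v₀, hv₀⟩ : (f₀ ∩ (F.erase f₀).biUnion id).Nonempty :=
    Finset.card_pos.mp (by have := hleaf f₀ hf₀; omega)
  obtain ⟨m, hm, p, hpm, hp⟩ :=
    hS.exists_periodic_chain hstep (a₀ := (v₀, f₀)) ⟨hf₀, (Finset.mem_inter.mp hv₀).1⟩
  exact hac ⟨m, fun i => (p i).1, fun i => (p i).2, hm, congrArg Prod.fst hpm,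
    congrArg Prod.snd hpm, fun i _ => hFE (hp i).1.1,
    fun i _ => G.edges_sub _ (hFE (hp i).1.1) (hp i).1.2, fun i _ => (hp i).2.2.1,
    fun i _ => (hp i).2.2.2, fun i _ => ⟨(hp i).1.2, (hp i).2.1⟩⟩

theorem one_add_card_mul_le_card_biUnion (hs : 0 < s) (hac : ¬ ∃ m v e, G.IsCycle m v e)
    {F : Finset (Finset ℕ)} (hFE : F ⊆ G.E) (hF : F.Nonempty) :
    1 + F.card * (s - 1) ≤ (F.biUnion id).card := by
  induction F using Finset.strongInduction with
  | H F ih =>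
    obtain ⟨f, hf, hleaf⟩ := exists_leaf hac hFE hF
    have hfs := G.card_edges f (hFE hf)
    have := Finset.card_union_add_card_inter f ((F.erase f).biUnion id)
    rw [← Finset.insert_erase hf, Finset.biUnion_insert, id,
      Finset.card_insert_of_notMem (Finset.notMem_erase f F), add_one_mul]
    obtain hF' | hF' := (F.erase f).eq_empty_or_nonempty
    · simp only [hF', Finset.card_empty, zero_mul, Finset.biUnion_empty, Finset.union_empty]
      omega
    · have := ih _ (Finset.erase_ssubset hf) ((Finset.erase_subset f F).trans hFE) hF'
      omega

theorem one_add_card_E_mul_le_card_V (hs : 0 < s) (hac : ¬ ∃ m v e, G.IsCycle m v e)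
    {H : UHypergraph s} (hE : H.E ⊆ G.E) (hV : H.V.Nonempty) :
    1 + H.E.card * (s - 1) ≤ H.V.card := by
  obtain hE' | hE' := H.E.eq_empty_or_nonempty
  · simpa [hE'] using hV.card_pos
  · exact (one_add_card_mul_le_card_biUnion hs hac hE hE').trans
      (Finset.card_le_card H.biUnion_E_subset_V)

theorem density_lt_density {H G : UHypergraph s} {c : ℕ} (hk : H.E.card < G.E.card)
    (hH : 1 + H.E.card * c ≤ H.V.card) (hG : G.V.card ≤ 1 + G.E.card * c)
    (hGV : G.V.Nonempty) : H.density < G.density := by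
  have key : H.E.card * G.V.card < G.E.card * H.V.card := calc
    H.E.card * G.V.card ≤ H.E.card * (1 + G.E.card * c) := Nat.mul_le_mul_left _ hG
    _ < G.E.card * (1 + H.E.card * c) := by nlinarith
    _ ≤ G.E.card * H.V.card := Nat.mul_le_mul_left _ hH
  rw [density, density, div_lt_div_iff₀ (by norm_cast; omega) (by exact_mod_cast hGV.card_pos)]
  exact_mod_cast key

end UHypergraph

/-- every `s`-uniform hypergraph tree is strictly balanced. -/
theorem stmt4 (s : ℕ) (hs : 2 ≤ s) (G : UHypergraph s) (hG : G.IsTree) :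
    G.StrictlyBalanced := by
  obtain ⟨hcon, hac⟩ := hG
  refine ⟨hcon.1, fun H hV hE hHV hne => ?_⟩
  have hGbound := hcon.card_V_le (by omega)
  have hHbound := one_add_card_E_mul_le_card_V (by omega) hac hE hHV
  -- with all `k` edges, `H` would already have `1 + k c ≥ |V(G)|` vertices
  have hk : H.E.card < G.E.card := by
    refine (Finset.card_le_card hE).lt_of_ne fun hcard => hne ⟨?_, ?_⟩
    · exact Finset.eq_of_subset_of_card_le hV (by rw [hcard] at hHbound; omega)
    · exact Finset.eq_of_subset_of_card_le hE hcard.ge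
  exact density_lt_density hk hHbound hGbound hcon.1
end

section
/- For a strictly balanced s-uniform hypergraph G, for every k ≥ 2 and every t with v(G) ≤ t ≤ k·v(G) − 1, the minimum number e_t of edges in a t-vertex union of k copies of G that are not mutually vertex disjoint satisfies e_t > t·ρ(G). -/
open scoped Classical

open UHypergraph

/-!
Write `surplus(I) = e(∪_{i∈I} G_i) - ρ(G)·v(∪_{i∈I} G_i)` for the union of the copies
`G_i = φ_i(G)` indexed by `I`. Adding one more copy `φ_c(G)` to the union, let `T ⊆ V(G)` be
the set of vertices that `φ_c` sends into the current union: the copy brings `v(G) - |T|` new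
vertices and, since only edges inside `T` can already be present, at least `e(G) - e(G[T])`
new edges. As `G` is balanced, `e(G[T]) ≤ ρ(G)|T|`, so the surplus never decreases. It is `0`
for a single copy, and it becomes positive when a second copy meeting the first is added:
either `T` is a nonempty proper subset of `V(G)` and strict balance gives `e(G[T]) < ρ(G)|T|`,
or both copies have the same vertex set and, being distinct, differ in some edge.
-/

open Finset

namespace UHypergraph

variable {s : ℕ} (G : UHypergraph s)

lemma density_mul_card (hV : G.V.Nonempty) : G.density * G.V.card = G.E.card := by
  rw [density, div_mul_cancel₀]
  exact_mod_cast hV.card_pos.ne'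

lemma restrict_V_of_subset {S : Finset ℕ} (hS : S ⊆ G.V) : (G.restrict S).V = S :=
  inter_eq_right.mpr hS

variable {G}

lemma StrictlyBalanced.card_restrict_edges_lt (hG : G.StrictlyBalanced) {S : Finset ℕ}
    (hSV : S ⊆ G.V) (hS : S.Nonempty) (hSne : S ≠ G.V) :
    ((G.restrict S).E.card : ℚ) < G.density * S.card := by
  have hV := restrict_V_of_subset G hSV
  have hlt := hG.2 (G.restrict S) (by rwa [hV]) (filter_subset _ _) (by rwa [hV])
    (by rw [hV]; exact fun h => hSne h.1)
  rw [← density_mul_card _ (by rwa [hV]), hV]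
  exact mul_lt_mul_of_pos_right hlt (by exact_mod_cast hS.card_pos)

lemma StrictlyBalanced.card_restrict_edges_le (hs : 0 < s) (hG : G.StrictlyBalanced)
    {S : Finset ℕ} (hSV : S ⊆ G.V) :
    ((G.restrict S).E.card : ℚ) ≤ G.density * S.card := by
  rcases S.eq_empty_or_nonempty with rfl | hS
  · have hempty : (G.restrict ∅).E = ∅ :=
      filter_eq_empty_iff.mpr fun e he hsub => by
        have := G.card_edges e he
        rw [subset_empty.mp hsub, card_empty] at this
        omega
    simp [hempty]
  rcases eq_or_ne S G.V with rfl | hSne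
  · rw [density_mul_card G hG.1]
    exact_mod_cast card_le_card (filter_subset _ _)
  · exact (hG.card_restrict_edges_lt hSV hS hSne).le

lemma card_image_V {f : ℕ → ℕ} (hf : Set.InjOn f G.V) : (G.V.image f).card = G.V.card :=
  card_image_of_injOn hf

lemma injOn_image_edges {f : ℕ → ℕ} (hf : Set.InjOn f G.V) :
    Set.InjOn (image f) (G.E : Set (Finset ℕ)) :=
  (image_injOn_powerset_of_injOn hf).mono fun e he => mem_powerset.mpr (G.edges_sub e he)

lemma card_image_E {f : ℕ → ℕ} (hf : Set.InjOn f G.V) :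
    (G.E.image (image f)).card = G.E.card :=
  card_image_of_injOn (injOn_image_edges hf)

lemma card_image_V_union_add_card_filter {f : ℕ → ℕ} (hf : Set.InjOn f G.V) (W : Finset ℕ) :
    (G.V.image f ∪ W).card + (G.V.filter (f · ∈ W)).card = W.card + G.V.card := by
  have hinter : G.V.image f ∩ W = (G.V.filter (f · ∈ W)).image f := by
    rw [← filter_mem_eq_inter, filter_image]
  rw [← card_image_of_injOn (hf.mono (filter_subset _ _)), ← hinter,
    card_union_add_card_inter, card_image_V hf, add_comm]

/-- An edge of `G` not inside `{x | f x ∈ W}` is not sent into `F`, whose edges lie in `W`. -/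
lemma card_add_card_E_le_card_union_add_card_restrict {f : ℕ → ℕ} (hf : Set.InjOn f G.V)
    {W : Finset ℕ} {F : Finset (Finset ℕ)} (hF : ∀ e ∈ F, e ⊆ W) :
    F.card + G.E.card ≤
      (G.E.image (image f) ∪ F).card + (G.restrict (G.V.filter (f · ∈ W))).E.card := by
  set T := G.V.filter (f · ∈ W)
  have hnew : (G.E.filter (¬ · ⊆ T)).image (image f) ⊆ (G.E.image (image f) ∪ F) \ F := by
    intro e' he'
    obtain ⟨e, he, rfl⟩ := mem_image.mp he'
    obtain ⟨heE, heT⟩ := mem_filter.mp he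
    refine mem_sdiff.mpr ⟨mem_union_left _ (mem_image_of_mem _ heE), fun heF => heT ?_⟩
    exact fun x hx => mem_filter.mpr
      ⟨G.edges_sub e heE hx, hF _ heF (mem_image_of_mem f hx)⟩
  have hcard := card_le_card hnew
  rw [card_image_of_injOn ((injOn_image_edges hf).mono (filter_subset _ _))] at hcard
  have hsplit := card_filter_add_card_filter_not (s := G.E) (p := (· ⊆ T))
  have hsdiff := card_sdiff_add_card (G.E.image (image f) ∪ F) F
  rw [union_assoc, union_self] at hsdiff
  change _ ≤ _ + (G.E.filter (· ⊆ T)).card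
  omega

section Copies

variable {ι : Type*}

variable (G) in
def unionV (φ : ι → ℕ → ℕ) (I : Finset ι) : Finset ℕ :=
  I.biUnion fun i => G.V.image (φ i)

variable (G) in
def unionE (φ : ι → ℕ → ℕ) (I : Finset ι) : Finset (Finset ℕ) :=
  I.biUnion fun i => G.E.image (image (φ i))

variable (G) in
noncomputable def surplus (φ : ι → ℕ → ℕ) (I : Finset ι) : ℚ :=
  (G.unionE φ I).card - G.density * (G.unionV φ I).card

lemma unionE_subset_unionV (φ : ι → ℕ → ℕ) (I : Finset ι) :
    ∀ e ∈ G.unionE φ I, e ⊆ G.unionV φ I := by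
  intro e' he'
  obtain ⟨i, hi, he'⟩ := mem_biUnion.mp he'
  obtain ⟨e, he, rfl⟩ := mem_image.mp he'
  exact (image_subset_image (G.edges_sub e he)).trans
    (subset_biUnion_of_mem (fun i => G.V.image (φ i)) hi)

lemma surplus_singleton (hV : G.V.Nonempty) {φ : ι → ℕ → ℕ} {i : ι}
    (hinj : Set.InjOn (φ i) G.V) : G.surplus φ {i} = 0 := by
  rw [surplus, unionE, unionV, singleton_biUnion, singleton_biUnion, card_image_E hinj,
    card_image_V hinj, density_mul_card G hV, sub_self]

lemma surplus_add_le_surplus_insert [DecidableEq ι] (hV : G.V.Nonempty) {φ : ι → ℕ → ℕ}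
    {c : ι} (hinj : Set.InjOn (φ c) G.V) (I : Finset ι) :
    let T := G.V.filter (φ c · ∈ G.unionV φ I)
    G.surplus φ I + (G.density * T.card - (G.restrict T).E.card) ≤
      G.surplus φ (insert c I) := by
  intro T
  have hV' : (G.unionV φ (insert c I)).card + T.card = (G.unionV φ I).card + G.V.card := by
    rw [show G.unionV φ (insert c I) = G.V.image (φ c) ∪ G.unionV φ I from biUnion_insert]
    exact card_image_V_union_add_card_filter hinj _
  have hE' : (G.unionE φ I).card + G.E.card ≤
      (G.unionE φ (insert c I)).card + (G.restrict T).E.card := by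
    rw [show G.unionE φ (insert c I) = G.E.image (image (φ c)) ∪ G.unionE φ I from
      biUnion_insert]
    exact card_add_card_E_le_card_union_add_card_restrict hinj (unionE_subset_unionV φ I)
  have hVq : ((G.unionV φ (insert c I)).card : ℚ) + T.card =
      (G.unionV φ I).card + G.V.card := by exact_mod_cast hV'
  have hEq : ((G.unionE φ I).card : ℚ) + G.E.card ≤
      (G.unionE φ (insert c I)).card + (G.restrict T).E.card := by exact_mod_cast hE'
  rw [surplus, surplus]
  linear_combination hEq + G.density * hVq + density_mul_card G hV

lemma surplus_mono [DecidableEq ι] (hs : 0 < s) (hG : G.StrictlyBalanced) {φ : ι → ℕ → ℕ}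
    (hinj : ∀ i, Set.InjOn (φ i) G.V) {I J : Finset ι} (hIJ : I ⊆ J) :
    G.surplus φ I ≤ G.surplus φ J := by
  rw [← union_sdiff_of_subset hIJ, union_comm]
  induction J \ I using Finset.induction_on with
  | empty => rw [empty_union]
  | insert c D _ ih =>
    rw [insert_union]
    have hstep := surplus_add_le_surplus_insert hG.1 (hinj c) (D ∪ I)
    have hT := hG.card_restrict_edges_le hs
      (filter_subset (φ c · ∈ G.unionV φ (D ∪ I)) G.V)
    linarith

lemma surplus_pair_pos [DecidableEq ι] (hG : G.StrictlyBalanced) {φ : ι → ℕ → ℕ}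
    {a b : ι} (ha : Set.InjOn (φ a) G.V) (hb : Set.InjOn (φ b) G.V)
    (hdistinct : (G.V.image (φ a), G.E.image (image (φ a))) ≠
      (G.V.image (φ b), G.E.image (image (φ b))))
    (hmeet : ¬ Disjoint (G.V.image (φ a)) (G.V.image (φ b))) :
    0 < G.surplus φ {a, b} := by
  by_cases hsub : G.V.image (φ a) ⊆ G.V.image (φ b)
  · have hVab : G.V.image (φ a) = G.V.image (φ b) :=
      eq_of_subset_of_card_le hsub (by rw [card_image_V ha, card_image_V hb])
    have hnot : ¬ G.E.image (image (φ a)) ⊆ G.E.image (image (φ b)) := fun hE =>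
      hdistinct (by rw [hVab, eq_of_subset_of_card_le hE (by rw [card_image_E ha,
        card_image_E hb])])
    have hlt : (G.E.image (image (φ b))).card < (G.unionE φ {a, b}).card := by
      rw [unionE, biUnion_insert, singleton_biUnion]
      exact card_lt_card (right_lt_sup.mpr hnot)
    have hV : G.unionV φ {a, b} = G.V.image (φ b) := by
      rw [unionV, biUnion_insert, singleton_biUnion, hVab, union_self]
    rw [card_image_E hb] at hlt
    rw [surplus, hV, card_image_V hb, density_mul_card G hG.1, sub_pos]
    exact_mod_cast hlt
  · have hstep := surplus_add_le_surplus_insert hG.1 ha {b}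
    rw [surplus_singleton hG.1 hb] at hstep
    set T := G.V.filter (φ a · ∈ G.unionV φ {b})
    have hT : T ⊆ G.V := filter_subset _ _
    have hmemT : ∀ x ∈ G.V, φ a x ∈ G.V.image (φ b) → x ∈ T := fun x hx hxb => by
      rw [mem_filter, unionV, singleton_biUnion]
      exact ⟨hx, hxb⟩
    have hTne : T.Nonempty := by
      obtain ⟨y, hya, hyb⟩ := not_disjoint_iff.mp hmeet
      obtain ⟨x, hx, rfl⟩ := mem_image.mp hya
      exact ⟨x, hmemT x hx hyb⟩
    have hTV : T ≠ G.V := fun hTV => hsub fun y hy => by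
      obtain ⟨x, hx, rfl⟩ := mem_image.mp hy
      rw [← hTV] at hx
      simpa [unionV] using (mem_filter.mp hx).2
    have := hG.card_restrict_edges_lt hT hTne hTV
    linarith

end Copies

end UHypergraph

theorem stmt9_general (s k t : ℕ) (hs : 2 ≤ s) (G : UHypergraph s)
    (hG : G.StrictlyBalanced)
    (φ : Fin k → ℕ → ℕ) (hinj : ∀ i, Set.InjOn (φ i) G.V)
    (hdistinct : ∀ i j : Fin k, i ≠ j →
      (G.V.image (φ i), G.E.image (fun e => e.image (φ i))) ≠
        (G.V.image (φ j), G.E.image (fun e => e.image (φ j))))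
    (hnd : ∃ i j : Fin k, i ≠ j ∧ ¬ Disjoint (G.V.image (φ i)) (G.V.image (φ j)))
    (htv : ((Finset.univ : Finset (Fin k)).biUnion (fun i => G.V.image (φ i))).card = t) :
    (t : ℚ) * G.density <
      (((Finset.univ : Finset (Fin k)).biUnion
        (fun i => G.E.image (fun e => e.image (φ i)))).card : ℚ) := by
  obtain ⟨a, b, hab, hmeet⟩ := hnd
  have hpos := surplus_pair_pos hG (hinj a) (hinj b) (hdistinct a b hab) hmeet
  have hmono := surplus_mono (by omega) hG hinj (subset_univ {a, b})
  have hsurplus : G.surplus φ univ = (G.unionE φ univ).card - G.density * t := by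
    rw [surplus, ← htv]
    rfl
  show (t : ℚ) * G.density < (G.unionE φ univ).card
  linarith

/-- for a strictly balanced `G`, any union of `k ≥ 2` distinct,
not mutually vertex disjoint copies of `G` on `t` vertices
(`v(G) ≤ t ≤ k·v(G) - 1`) has more than `t·ρ(G)` edges. -/
theorem stmt9 (s k t : ℕ) (hs : 2 ≤ s) (hk : 2 ≤ k) (G : UHypergraph s)
    (hG : G.StrictlyBalanced)
    (ht₁ : G.V.card ≤ t) (ht₂ : t ≤ k * G.V.card - 1)
    (φ : Fin k → ℕ → ℕ) (hinj : ∀ i, Set.InjOn (φ i) G.V)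
    (hdistinct : ∀ i j : Fin k, i ≠ j →
      (G.V.image (φ i), G.E.image (fun e => e.image (φ i))) ≠
        (G.V.image (φ j), G.E.image (fun e => e.image (φ j))))
    (hnd : ∃ i j : Fin k, i ≠ j ∧ ¬ Disjoint (G.V.image (φ i)) (G.V.image (φ j)))
    (htv : ((Finset.univ : Finset (Fin k)).biUnion (fun i => G.V.image (φ i))).card = t) :
    (t : ℚ) * G.density <
      (((Finset.univ : Finset (Fin k)).biUnion
        (fun i => G.E.image (fun e => e.image (φ i)))).card : ℚ) :=
  stmt9_general s k t hs G hG φ hinj hdistinct hnd htv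
end

section
/- Let α > 0 be irrational, G an s-uniform hypergraph, and t a positive integer. If x = x_0 ⊂ x_1 ⊂ … ⊂ x_k = z and y = y_0 ⊂ y_1 ⊂ … ⊂ y_l, with y ⊆ z, are rigid t-chains in G, then x = x_0 ⊂ … ⊂ x_k ∪ y_1 ⊂ … ⊂ x_k ∪ y_l = z ∪ y_l is also a rigid t-chain; consequently, the t-closure cl_t(x) (the maximal endpoint of a rigid t-chain starting at x, or x itself if none exists) is well defined. -/
open scoped Classical

open UHypergraph

/-! Adding a set `W` to both ends of a rigid extension keeps it rigid: for roots `S ⊇ W` of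
`(W ∪ R, G|_{W ∪ B})`, the nonroot vertices are those of `(S ∩ B, G|_B)` while the edges with a
nonroot vertex can only be more, so the excess `v - eα` can only drop. Hence a rigid `t`-chain
stays one after a union with a fixed set, so two chains from `X` can be concatenated; the
endpoints of the rigid `t`-chains from `X` thus form a finite family closed under unions, and
its largest member is the `t`-closure. -/

section Append

variable {β : Type*}

def seqAppend (x z : ℕ → β) (k : ℕ) : ℕ → β := fun i => if i ≤ k then x i else z (i - k)

variable {x z : ℕ → β} {k l : ℕ}

lemma seqAppend_of_le {i : ℕ} (hi : i ≤ k) : seqAppend x z k i = x i := if_pos hi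

lemma seqAppend_of_ge (h : z 0 = x k) {i : ℕ} (hi : k ≤ i) : seqAppend x z k i = z (i - k) := by
  rcases hi.eq_or_lt with rfl | hi
  · rw [seqAppend_of_le le_rfl, Nat.sub_self, h]
  · exact if_neg hi.not_ge

lemma seqAppend_forall_le {Q : β → Prop} (hx : ∀ i ≤ k, Q (x i)) (hz : ∀ i ≤ l, Q (z i)) :
    ∀ i ≤ k + l, Q (seqAppend x z k i) := by
  intro i hi
  unfold seqAppend
  split_ifs with hik
  · exact hx i hik
  · exact hz (i - k) (by omega)

lemma seqAppend_forall_lt_succ {P : β → β → Prop} (hx : ∀ i < k, P (x i) (x (i + 1)))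
    (hz : ∀ i < l, P (z i) (z (i + 1))) (h : z 0 = x k) :
    ∀ i < k + l, P (seqAppend x z k i) (seqAppend x z k (i + 1)) := by
  intro i hi
  rcases lt_or_ge i k with hik | hki
  · rw [seqAppend_of_le hik.le, seqAppend_of_le hik]
    exact hx i hik
  · rw [seqAppend_of_ge h hki, seqAppend_of_ge h (hki.trans i.le_succ),
      show i + 1 - k = i - k + 1 by omega]
    exact hz (i - k) (by omega)

end Append

lemma SupClosed.exists_isGreatest {γ : Type*} [SemilatticeSup γ] {S : Set γ} (hS : SupClosed S)
    (hfin : S.Finite) (hne : S.Nonempty) : ∃ a, IsGreatest S a := by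
  obtain ⟨a, haS, hmax⟩ := hfin.exists_maximal hne
  exact ⟨a, haS, fun b hb => le_sup_right.trans (hmax (hS haS hb) le_sup_left)⟩

namespace UHypergraph

variable {s : ℕ} {α : ℝ} {G : UHypergraph s}

section Rigid

variable {W R B S : Finset ℕ}

lemma restrict_union_V_sdiff (hW : W ⊆ S) :
    (G.restrict (W ∪ B)).V \ S = (G.restrict B).V \ (S ∩ B) := by
  ext a
  have := @hW a
  simp only [restrict, Finset.mem_sdiff, Finset.mem_inter, Finset.mem_union]
  tauto

lemma filter_not_subset_restrict_subset_restrict_union :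
    (G.restrict B).E.filter (fun f => ¬ f ⊆ S ∩ B) ⊆
      (G.restrict (W ∪ B)).E.filter (fun f => ¬ f ⊆ S) := by
  intro e he
  simp only [restrict, Finset.mem_filter] at he ⊢
  exact ⟨⟨he.1.1, he.1.2.trans Finset.subset_union_right⟩,
    fun heS => he.2 (Finset.subset_inter heS he.1.2)⟩

lemma exVal_restrict_union_le (hα : 0 ≤ α) (hW : W ⊆ S) :
    exVal α S (G.restrict (W ∪ B)) ≤ exVal α (S ∩ B) (G.restrict B) := by
  have hcard := Finset.card_le_card
    (filter_not_subset_restrict_subset_restrict_union (G := G) (W := W) (B := B) (S := S))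
  unfold exVal
  rw [restrict_union_V_sdiff hW]
  gcongr

lemma Rigid.union_left (hα : 0 ≤ α) (hRB : R ⊆ B) (h : Rigid α R (G.restrict B))
    (W : Finset ℕ) : Rigid α (W ∪ R) (G.restrict (W ∪ B)) := by
  intro S hS hSV
  obtain ⟨hW, hR⟩ := Finset.union_subset_iff.mp hS
  have hSB : S ∩ B ⊂ (G.restrict B).V := by
    obtain ⟨v, hv, hvS⟩ := Finset.exists_of_ssubset hSV
    simp only [restrict, Finset.mem_inter, Finset.mem_union] at hv
    have hvB : v ∈ B := hv.2.resolve_left fun hvW => hvS (hW hvW)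
    refine Finset.ssubset_iff_of_subset
      (Finset.inter_subset_inter_right (hSV.1.trans Finset.inter_subset_left)) |>.mpr
      ⟨v, Finset.mem_inter.mpr ⟨hv.1, hvB⟩, fun hv' => hvS (Finset.mem_inter.mp hv').1⟩
  exact (exVal_restrict_union_le hα hW).trans_lt (h _ (Finset.subset_inter hR hRB) hSB)

end Rigid

section Chain

variable {t k l : ℕ} {x y z : ℕ → Finset ℕ}

def IsRigidStep (α : ℝ) (G : UHypergraph s) (t : ℕ) (a b : Finset ℕ) : Prop :=
  a ⊆ b ∧ (b \ a).card ≤ t ∧ Rigid α a (G.restrict b)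

lemma isRigidChain_iff : IsRigidChain α G t k x ↔
    (∀ i < k, IsRigidStep α G t (x i) (x (i + 1))) ∧ ∀ i ≤ k, x i ⊆ G.V := by
  unfold IsRigidChain IsRigidStep
  constructor
  · rintro ⟨hsub, hcard, hV, hrig⟩
    exact ⟨fun i hi => ⟨hsub i hi, hcard i hi, hrig i hi⟩, hV⟩
  · rintro ⟨hstep, hV⟩
    exact ⟨fun i hi => (hstep i hi).1, fun i hi => (hstep i hi).2.1, hV,
      fun i hi => (hstep i hi).2.2⟩

lemma IsRigidStep.union_left (hα : 0 ≤ α) {a b : Finset ℕ} (h : IsRigidStep α G t a b)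
    (W : Finset ℕ) : IsRigidStep α G t (W ∪ a) (W ∪ b) := by
  obtain ⟨hab, hcard, hrig⟩ := h
  refine ⟨Finset.union_subset_union_right hab, le_trans (Finset.card_le_card ?_) hcard,
    hrig.union_left hα hab W⟩
  intro v
  simp only [Finset.mem_sdiff, Finset.mem_union]
  tauto

lemma isRigidChain_const {X : Finset ℕ} (hX : X ⊆ G.V) :
    IsRigidChain α G t 0 (fun _ => X) :=
  isRigidChain_iff.mpr ⟨fun _ hi => absurd hi (Nat.not_lt_zero _), fun _ _ => hX⟩

lemma IsRigidChain.subset_V (hx : IsRigidChain α G t k x) {i : ℕ} (hi : i ≤ k) : x i ⊆ G.V :=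
  hx.2.2.1 i hi

lemma IsRigidChain.start_subset (hx : IsRigidChain α G t k x) {i : ℕ} (hi : i ≤ k) :
    x 0 ⊆ x i := by
  induction i with
  | zero => exact le_rfl
  | succ i ih => exact (ih (by omega)).trans (hx.1 i hi)

lemma IsRigidChain.union_left (hα : 0 ≤ α) (hy : IsRigidChain α G t l y) {W : Finset ℕ}
    (hW : W ⊆ G.V) : IsRigidChain α G t l (fun i => W ∪ y i) := by
  obtain ⟨hstep, hV⟩ := isRigidChain_iff.mp hy
  exact isRigidChain_iff.mpr ⟨fun i hi => (hstep i hi).union_left hα W,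
    fun i hi => Finset.union_subset hW (hV i hi)⟩

lemma IsRigidChain.append (hx : IsRigidChain α G t k x) (hz : IsRigidChain α G t l z)
    (h : z 0 = x k) : IsRigidChain α G t (k + l) (seqAppend x z k) := by
  obtain ⟨hxstep, hxV⟩ := isRigidChain_iff.mp hx
  obtain ⟨hzstep, hzV⟩ := isRigidChain_iff.mp hz
  exact isRigidChain_iff.mpr
    ⟨seqAppend_forall_lt_succ hxstep hzstep h, seqAppend_forall_le (Q := (· ⊆ G.V)) hxV hzV⟩

lemma IsRigidChain.append_union (hα : 0 ≤ α) (hx : IsRigidChain α G t k x)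
    (hy : IsRigidChain α G t l y) (hyx : y 0 ⊆ x k) :
    IsRigidChain α G t (k + l) (seqAppend x (fun i => x k ∪ y i) k) ∧
      seqAppend x (fun i => x k ∪ y i) k (k + l) = x k ∪ y l := by
  have hseam : x k ∪ y 0 = x k := Finset.union_eq_left.mpr hyx
  refine ⟨hx.append (hy.union_left hα (hx.subset_V le_rfl)) hseam, ?_⟩
  rw [seqAppend_of_ge (z := fun i => x k ∪ y i) hseam (Nat.le_add_right k l),
    Nat.add_sub_cancel_left]

end Chain

section Closure

variable {t : ℕ} {X C : Finset ℕ}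

def chainEnds (α : ℝ) (G : UHypergraph s) (t : ℕ) (X : Finset ℕ) : Set (Finset ℕ) :=
  {C | ∃ k x, IsRigidChain α G t k x ∧ x 0 = X ∧ x k = C}

lemma isTClosure_iff_isGreatest : IsTClosure α G t X C ↔ IsGreatest (chainEnds α G t X) C :=
  and_congr Iff.rfl ⟨fun h _ ⟨k, x, hx, hx0, hxk⟩ => hxk ▸ h k x hx hx0,
    fun h k x hx hx0 => h ⟨k, x, hx, hx0, rfl⟩⟩

lemma self_mem_chainEnds (hX : X ⊆ G.V) : X ∈ chainEnds α G t X :=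
  ⟨0, fun _ => X, isRigidChain_const hX, rfl, rfl⟩

lemma chainEnds_finite : (chainEnds α G t X).Finite :=
  G.V.powerset.finite_toSet.subset fun _ ⟨_, _, hx, _, hxk⟩ =>
    Finset.mem_coe.mpr (Finset.mem_powerset.mpr (hxk ▸ hx.subset_V le_rfl))

lemma supClosed_chainEnds (hα : 0 ≤ α) : SupClosed (chainEnds α G t X) := by
  rintro _ ⟨k, x, hx, hx0, rfl⟩ _ ⟨l, y, hy, hy0, rfl⟩
  obtain ⟨hxy, hend⟩ := hx.append_union hα hy (hy0.trans hx0.symm ▸ hx.start_subset le_rfl)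
  exact ⟨k + l, _, hxy, (seqAppend_of_le k.zero_le).trans hx0, hend⟩

theorem existsUnique_isTClosure (hα : 0 ≤ α) (hX : X ⊆ G.V) :
    ∃! C, IsTClosure α G t X C := by
  simp only [isTClosure_iff_isGreatest]
  obtain ⟨C, hC⟩ := (supClosed_chainEnds hα).exists_isGreatest chainEnds_finite
    ⟨X, self_mem_chainEnds hX⟩
  exact ⟨C, hC, fun D hD => hD.unique hC⟩

end Closure

end UHypergraph

theorem stmt14_general (s : ℕ) (α : ℝ) (hα : 0 < α)
    (G : UHypergraph s) (t : ℕ)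
    (k l : ℕ) (x y : ℕ → Finset ℕ)
    (hx : IsRigidChain α G t k x) (hy : IsRigidChain α G t l y)
    (hstart : y 0 ⊆ x k) :
    (IsRigidChain α G t (k + l) (fun i => if i ≤ k then x i else x k ∪ y (i - k)) ∧
      (fun i => if i ≤ k then x i else x k ∪ y (i - k)) (k + l) = x k ∪ y l) ∧
    ∀ X : Finset ℕ, X ⊆ G.V → ∃! C : Finset ℕ, IsTClosure α G t X C :=
  ⟨hx.append_union hα.le hy hstart, fun _ hX => existsUnique_isTClosure hα.le hX⟩

/-- concatenating a rigid `t`-chain `x 0 ⊆ … ⊆ x k` with a rigid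
`t`-chain `y 0 ⊆ … ⊆ y l` satisfying `y 0 ⊆ x k` (by taking unions with `x k`)
yields a rigid `t`-chain from `x 0` to `x k ∪ y l`; consequently, every
`X ⊆ V(G)` has a well-defined `t`-closure. -/
theorem stmt14 (s : ℕ) (hs : 2 ≤ s) (α : ℝ) (hα : 0 < α) (hirr : Irrational α)
    (G : UHypergraph s) (t : ℕ) (ht : 0 < t)
    (k l : ℕ) (x y : ℕ → Finset ℕ)
    (hx : IsRigidChain α G t k x) (hy : IsRigidChain α G t l y)
    (hstart : y 0 ⊆ x k) :
    (IsRigidChain α G t (k + l) (fun i => if i ≤ k then x i else x k ∪ y (i - k)) ∧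
      (fun i => if i ≤ k then x i else x k ∪ y (i - k)) (k + l) = x k ∪ y l) ∧
    ∀ X : Finset ℕ, X ⊆ G.V → ∃! C : Finset ℕ, IsTClosure α G t X C :=
  stmt14_general s α hα G t k l x y hx hy hstart
end
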